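/- arXiv:2510.25546 — 2 statements merged into one kernel-verified Lean document; each statement's English description precedes it below -/
import Mathlib

section
/- Let V be a finite-dimensional inner product space, Π the orthogonal projection onto a subspace W of V, P the orthogonal projection onto a subspace A of V with W ⊆ A, and L : V → V linear with L(W) ⊆ W. Then for every t ≥ 0, Π ∘ e^{t(Π∘L∘Π)} ∘ Π = Π ∘ e^{t(P∘L∘P)} ∘ Π. -/
/-!
Write `M = Π L Π` and `N = P L P`. Since `L` maps `W` into `W ⊆ A`, both `M Π` and `N Π` equal
`L Π`, while `Π M = M`. Hence `Π` commutes with `M` and intertwines `N` with `M`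
(`N Π = Π M`), and these relations pass to the exponential series:
`e^{tM} Π = Π e^{tM}` and `e^{tN} Π = Π e^{tM}`. Sandwiching with `Π` gives `Π e^{tM}` on both sides.
-/

open NormedSpace

section BanachAlgebra

variable {𝔸 : Type*} [NormedRing 𝔸] [NormedAlgebra ℚ 𝔸] [CompleteSpace 𝔸] {p q l : 𝔸}

theorem mul_exp_mul_mul_mul_eq_of_invariant (hp : p * p = p) (hqp : q * p = p)
    (hlp : p * (l * p) = l * p) :
    p * exp (p * l * p) * p = p * exp (q * l * q) * p := by
  have hM : p * l * p = l * p := by rw [mul_assoc, hlp]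
  have hcomm : SemiconjBy p (l * p) (l * p) := by
    rw [SemiconjBy, hlp, mul_assoc, hp]
  have hqlp : q * (l * p) = l * p := by rw [← hlp, ← mul_assoc, hqp]
  have hintertwine : SemiconjBy p (l * p) (q * l * q) := by
    rw [SemiconjBy, hlp, mul_assoc, hqp, mul_assoc, hqlp]
  rw [hM, mul_assoc, ← hcomm.exp_right, ← mul_assoc, hp, mul_assoc, ← hintertwine.exp_right,
    ← mul_assoc, hp]

end BanachAlgebra

theorem ContinuousLinearMap.mul_eq_right_of_forall_mem {𝕜 E : Type*} [NormedField 𝕜]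
    [NormedAddCommGroup E] [NormedSpace 𝕜 E] {S T : E →L[𝕜] E} {W : Submodule 𝕜 E}
    (hT : ∀ x, T x ∈ W) (hS : ∀ x ∈ W, S x = x) : S * T = T :=
  ext fun x => hS _ (hT x)

theorem stmt13_general
    {V : Type*} [NormedAddCommGroup V] [InnerProductSpace ℂ V] [FiniteDimensional ℂ V]
    (Proj P L : V →L[ℂ] V) (W A : Submodule ℂ V) (hWA : W ≤ A)
    (hProjIdem : Proj.comp Proj = Proj)
    (hProjRange : ∀ x, Proj x ∈ W) (hProjFix : ∀ x ∈ W, Proj x = x)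
    (hPFix : ∀ x ∈ A, P x = x)
    (hLinv : ∀ x ∈ W, L x ∈ W) :
    ∀ t : ℝ, 0 ≤ t →
      Proj.comp ((NormedSpace.exp ((t : ℂ) • (Proj.comp (L.comp Proj)))).comp Proj) =
        Proj.comp ((NormedSpace.exp ((t : ℂ) • (P.comp (L.comp P)))).comp Proj) := by
  intro t _
  have hPProj : P * Proj = Proj :=
    ContinuousLinearMap.mul_eq_right_of_forall_mem hProjRange fun x hx => hPFix x (hWA hx)
  have hinv : Proj * ((t : ℂ) • L * Proj) = (t : ℂ) • L * Proj :=
    ContinuousLinearMap.mul_eq_right_of_forall_mem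
      (fun x => W.smul_mem _ (hLinv _ (hProjRange x))) hProjFix
  let : NormedAlgebra ℚ (V →L[ℂ] V) := NormedAlgebra.restrictScalars ℚ ℂ _
  have key := mul_exp_mul_mul_mul_eq_of_invariant hProjIdem hPProj hinv
  simp only [mul_smul_comm, smul_mul_assoc] at key
  exact key

/-- if `Proj` is the orthogonal projection onto `W`, `P` the orthogonal
projection onto `A` with `W ⊆ A`, and `L(W) ⊆ W`, then for all `t ≥ 0`,
`Proj ∘ e^{t(Proj L Proj)} ∘ Proj = Proj ∘ e^{t(P L P)} ∘ Proj`. -/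
theorem stmt13
    {V : Type*} [NormedAddCommGroup V] [InnerProductSpace ℂ V] [FiniteDimensional ℂ V]
    (Proj P L : V →L[ℂ] V) (W A : Submodule ℂ V) (hWA : W ≤ A)
    (hProjIdem : Proj.comp Proj = Proj) (hProjAdj : ContinuousLinearMap.adjoint Proj = Proj)
    (hProjRange : ∀ x, Proj x ∈ W) (hProjFix : ∀ x ∈ W, Proj x = x)
    (hPIdem : P.comp P = P) (hPAdj : ContinuousLinearMap.adjoint P = P)
    (hPRange : ∀ x, P x ∈ A) (hPFix : ∀ x ∈ A, P x = x)
    (hLinv : ∀ x ∈ W, L x ∈ W) :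
    ∀ t : ℝ, 0 ≤ t →
      Proj.comp ((NormedSpace.exp ((t : ℂ) • (Proj.comp (L.comp Proj)))).comp Proj) =
        Proj.comp ((NormedSpace.exp ((t : ℂ) • (P.comp (L.comp P)))).comp Proj) :=
  stmt13_general Proj P L W A hWA hProjIdem hProjRange hProjFix hPFix hLinv
end

section
/- Let H_S = ℂ², H_B = ℂ^{2^N}, and let A = span{σ_u ⊗ |j⟩⟨j|} as above. Suppose H₀ and every L_k are of the form Σ_j (c_j σ_z + d_j 𝟙) ⊗ |j⟩⟨j| (i.e., diagonal in the bath basis and diagonal or proportional to identity on the system up to σ_z terms), and H_c = σ_x ⊗ 𝟙_B u₀ + σ_z ⊗ 𝟙_B u₁ for real u₀, u₁. Then the Lindblad generator L(O) = i[H₀ + H_c, O] + Σ_k (L_k† O L_k − ½{L_k† L_k, O}) maps A into A. -/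
/-! Since the Pauli matrices span `M₂(ℂ)`, the algebra `A` is exactly the image of
`Matrix.blockDiagonal`, i.e. the matrices that are block diagonal with respect to the bath basis.
This is a ⋆-subalgebra containing `H₀`, `H_c` and every `L_k`, and the Lindbladian is built from
these, `O`, and adjoints by products and linear combinations. -/

open Matrix

/-- Kronecker product of a system operator with a bath operator. -/
noncomputable def tensorOp {F G : Type*}
    (A : Matrix F F ℂ) (B : Matrix G G ℂ) : Matrix (F × G) (F × G) ℂ :=
  Matrix.of fun p q => A p.1 q.1 * B p.2 q.2

noncomputable def sigmaX : Matrix (Fin 2) (Fin 2) ℂ := !![0, 1; 1, 0]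
noncomputable def sigmaY : Matrix (Fin 2) (Fin 2) ℂ := !![0, -Complex.I; Complex.I, 0]
noncomputable def sigmaZ : Matrix (Fin 2) (Fin 2) ℂ := !![1, 0; 0, -1]

/-- The Pauli matrices `σ₀ = 𝟙, σ_x, σ_y, σ_z`. -/
noncomputable def pauli : Fin 4 → Matrix (Fin 2) (Fin 2) ℂ := ![1, sigmaX, sigmaY, sigmaZ]

section BathDiagonal

variable {F G : Type*} [DecidableEq G]

theorem tensorOp_single_eq_blockDiagonal (A : Matrix F F ℂ) (j : G) :
    tensorOp A (single j j 1) = blockDiagonal (Pi.single j A) := by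
  ext ⟨a, k⟩ ⟨b, k'⟩
  simp only [tensorOp, of_apply, single_apply, blockDiagonal_apply', Pi.single_apply]
  split_ifs <;> aesop

theorem tensorOp_one_eq_blockDiagonal (A : Matrix F F ℂ) :
    tensorOp A (1 : Matrix G G ℂ) = blockDiagonal fun _ => A := by
  ext ⟨a, k⟩ ⟨b, k'⟩
  simp only [tensorOp, of_apply, one_apply, blockDiagonal_apply']
  split_ifs <;> simp

variable [Fintype F] [DecidableEq F] [Fintype G]

variable (F G) in
noncomputable def blockDiagonalStarAlgHom :
    (G → Matrix F F ℂ) →⋆ₐ[ℂ] Matrix (F × G) (F × G) ℂ where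
  __ := blockDiagonalRingHom F G ℂ
  commutes' r := by simp [Algebra.algebraMap_eq_smul_one]
  map_star' M := (blockDiagonal_conjTranspose M).symm

variable (F G) in
noncomputable def bathDiagonal : StarSubalgebra ℂ (Matrix (F × G) (F × G) ℂ) :=
  (blockDiagonalStarAlgHom F G).range

theorem tensorOp_single_mem_bathDiagonal (A : Matrix F F ℂ) (j : G) :
    tensorOp A (single j j 1) ∈ bathDiagonal F G :=
  ⟨Pi.single j A, (tensorOp_single_eq_blockDiagonal A j).symm⟩

theorem tensorOp_one_mem_bathDiagonal (A : Matrix F F ℂ) :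
    tensorOp A (1 : Matrix G G ℂ) ∈ bathDiagonal F G :=
  ⟨fun _ => A, (tensorOp_one_eq_blockDiagonal A).symm⟩

theorem span_tensorOp_single_eq_bathDiagonal {ι : Type*} {b : ι → Matrix F F ℂ}
    (hb : Submodule.span ℂ (Set.range b) = ⊤) :
    Submodule.span ℂ {M | ∃ (u : ι) (j : G), M = tensorOp (b u) (single j j (1 : ℂ))} =
      (bathDiagonal F G).toSubalgebra.toSubmodule := by
  set S := Submodule.span ℂ
    {M | ∃ (u : ι) (j : G), M = tensorOp (b u) (single j j (1 : ℂ))}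
  apply le_antisymm
  · rw [Submodule.span_le]
    rintro _ ⟨u, j, rfl⟩
    exact tensorOp_single_mem_bathDiagonal (b u) j
  · rintro _ ⟨M, rfl⟩
    let f (j : G) : Matrix F F ℂ →ₗ[ℂ] Matrix (F × G) (F × G) ℂ :=
      (blockDiagonalStarAlgHom F G).toLinearMap ∘ₗ
        LinearMap.single ℂ (fun _ : G => Matrix F F ℂ) j
    have hf (j : G) : Submodule.map (f j) ⊤ ≤ S := by
      rw [← hb, Submodule.map_span_le]
      rintro _ ⟨u, rfl⟩
      exact Submodule.subset_span ⟨u, j, (tensorOp_single_eq_blockDiagonal _ _).symm⟩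
    rw [← Finset.univ_sum_single M, map_sum]
    exact Submodule.sum_mem _ fun j _ => hf j ⟨M j, trivial, rfl⟩

end BathDiagonal

theorem span_range_pauli_eq_top : Submodule.span ℂ (Set.range pauli) = ⊤ := by
  -- the coefficients are `tr (σ_u * A) / 2`
  refine Submodule.eq_top_iff'.2 fun A => (Submodule.mem_span_range_iff_exists_fun ℂ).2
    ⟨![(A 0 0 + A 1 1) / 2, (A 0 1 + A 1 0) / 2, Complex.I * (A 0 1 - A 1 0) / 2,
      (A 0 0 - A 1 1) / 2], ?_⟩
  ext i j
  fin_cases i <;> fin_cases j <;>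
    simp [Fin.sum_univ_four, pauli, sigmaX, sigmaY, sigmaZ] <;> ring_nf <;> simp <;> ring

section Lindblad

variable {R K : Type*} [Ring R] [StarRing R] [Algebra ℂ R] [Fintype K]

noncomputable def lindbladian (H : R) (L : K → R) (O : R) : R :=
  Complex.I • (H * O - O * H) +
    ∑ k, (star (L k) * O * L k -
      (1 / 2 : ℂ) • (star (L k) * L k * O + O * (star (L k) * L k)))

theorem lindbladian_mem [StarModule ℂ R] {S : StarSubalgebra ℂ R} {H O : R} {L : K → R}
    (hH : H ∈ S) (hL : ∀ k, L k ∈ S) (hO : O ∈ S) : lindbladian H L O ∈ S := by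
  have hLL (k : K) : star (L k) * L k ∈ S := mul_mem (star_mem (hL k)) (hL k)
  refine add_mem (S.smul_mem (sub_mem (mul_mem hH hO) (mul_mem hO hH)) _) (sum_mem fun k _ => ?_)
  exact sub_mem (mul_mem (mul_mem (star_mem (hL k)) hO) (hL k))
    (S.smul_mem (add_mem (mul_mem (hLL k) hO) (mul_mem hO (hLL k))) _)

end Lindblad

/-- for a dephasing central-spin model with bath-diagonal `H₀` and
noise operators, and a controlled system Hamiltonian `H_c = u₀ σ_x ⊗ 𝟙 + u₁ σ_z ⊗ 𝟙`,
the Lindblad generator maps the algebra `A = span{σ_u ⊗ |j⟩⟨j|}` into itself. -/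
theorem stmt15 (N : ℕ) {K : Type*} [Fintype K]
    (c d : Fin (2 ^ N) → ℝ) (c' d' : K → Fin (2 ^ N) → ℝ) (u₀ u₁ : ℝ)
    (H₀ : Matrix (Fin 2 × Fin (2 ^ N)) (Fin 2 × Fin (2 ^ N)) ℂ)
    (hH₀ : H₀ = ∑ j : Fin (2 ^ N),
      tensorOp ((c j : ℂ) • sigmaZ + (d j : ℂ) • 1) (Matrix.single j j (1 : ℂ)))
    (L : K → Matrix (Fin 2 × Fin (2 ^ N)) (Fin 2 × Fin (2 ^ N)) ℂ)
    (hL : ∀ k, L k = ∑ j : Fin (2 ^ N),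
      tensorOp ((c' k j : ℂ) • sigmaZ + (d' k j : ℂ) • 1) (Matrix.single j j (1 : ℂ)))
    (Hc : Matrix (Fin 2 × Fin (2 ^ N)) (Fin 2 × Fin (2 ^ N)) ℂ)
    (hHc : Hc = (u₀ : ℂ) • tensorOp sigmaX (1 : Matrix (Fin (2 ^ N)) (Fin (2 ^ N)) ℂ) +
      (u₁ : ℂ) • tensorOp sigmaZ (1 : Matrix (Fin (2 ^ N)) (Fin (2 ^ N)) ℂ)) :
    ∀ O ∈ Submodule.span ℂ
        {M : Matrix (Fin 2 × Fin (2 ^ N)) (Fin 2 × Fin (2 ^ N)) ℂ |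
          ∃ (u : Fin 4) (j : Fin (2 ^ N)),
            M = tensorOp (pauli u) (Matrix.single j j (1 : ℂ))},
      (Complex.I • ((H₀ + Hc) * O - O * (H₀ + Hc)) +
        ∑ k : K, ((L k)ᴴ * O * L k -
          (1/2 : ℂ) • ((L k)ᴴ * L k * O + O * ((L k)ᴴ * L k)))) ∈
      Submodule.span ℂ
        {M : Matrix (Fin 2 × Fin (2 ^ N)) (Fin 2 × Fin (2 ^ N)) ℂ |
          ∃ (u : Fin 4) (j : Fin (2 ^ N)),
            M = tensorOp (pauli u) (Matrix.single j j (1 : ℂ))} := by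
  intro O hO
  rw [span_tensorOp_single_eq_bathDiagonal span_range_pauli_eq_top] at hO ⊢
  have hH₀_mem : H₀ ∈ bathDiagonal (Fin 2) (Fin (2 ^ N)) :=
    hH₀ ▸ sum_mem fun j _ => tensorOp_single_mem_bathDiagonal _ j
  have hHc_mem : Hc ∈ bathDiagonal (Fin 2) (Fin (2 ^ N)) :=
    hHc ▸ add_mem ((bathDiagonal _ _).smul_mem (tensorOp_one_mem_bathDiagonal _) _)
      ((bathDiagonal _ _).smul_mem (tensorOp_one_mem_bathDiagonal _) _)
  have hL_mem (k : K) : L k ∈ bathDiagonal (Fin 2) (Fin (2 ^ N)) :=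
    hL k ▸ sum_mem fun j _ => tensorOp_single_mem_bathDiagonal _ j
  exact lindbladian_mem (add_mem hH₀_mem hHc_mem) hL_mem hO
end
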